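/- arXiv:math/0407077 — 3 statements merged into one kernel-verified Lean document; each statement's English description precedes it below -/
import Mathlib

section
/- Let P be a finite p-group and R = F_p. Any monomorphism between two indecomposable projective coefficient systems R[P/U^?] → R[P/V^?] is an isomorphism; in particular U and V are conjugate in P. -/
open CategoryTheory

universe u

variable (R : Type) [CommRing R] (G : Type) [Group G]

/-- The category of `G`-sets. -/
abbrev GSet := Action (Type) (MonCat.of G)

/-- The orbit `G/H` as a `G`-set. -/
def orbitGSet (H : Subgroup G) : GSet G := Action.ofMulAction G (G ⧸ H)

/-- A `G`-set is an orbit if it is isomorphic to some `G/H`. -/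
def IsOrbit (X : GSet G) : Prop := ∃ H : Subgroup G, Nonempty (X ≅ orbitGSet G H)

/-- The orbit category of `G`. -/
def OrbitCat := ObjectProperty.FullSubcategory (IsOrbit G)

instance : Category (OrbitCat G) := ObjectProperty.FullSubcategory.category _

/-- Coefficient systems for `G` over `R`: contravariant functors from the orbit
category of `G` to `R`-modules. -/
abbrev CoeffSystem := (OrbitCat G)ᵒᵖ ⥤ ModuleCat R

/-- The orbit `G/H` as an object of the orbit category. -/
def orbitObj (H : Subgroup G) : OrbitCat G := ⟨orbitGSet G H, H, ⟨Iso.refl _⟩⟩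

/-- Forget an orbit-category morphism to a morphism of `G`-sets. -/
def toGHom {O O' : OrbitCat G} (u : O ⟶ O') : O.obj ⟶ O'.obj := u.hom

variable {G} in
@[simp] lemma toGHom_id (O : OrbitCat G) : toGHom G (𝟙 O) = 𝟙 O.obj := rfl

variable {G} in
@[simp] lemma toGHom_comp {O O' O'' : OrbitCat G} (u : O ⟶ O') (v : O' ⟶ O'') :
    toGHom G (u ≫ v) = toGHom G u ≫ toGHom G v := rfl

/-- The coefficient system `R[X^?]`: its value on an orbit `O` is the free `R`-module
on the set of `G`-maps `O ⟶ X`, which for `O = G/K` is the fixed point set `X^K`. -/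
noncomputable def freeSystem (X : GSet G) : CoeffSystem R G where
  obj O := ModuleCat.of R ((O.unop.obj ⟶ X) →₀ R)
  map {O O'} f := ModuleCat.ofHom (Finsupp.lmapDomain R R (fun φ => toGHom G f.unop ≫ φ))
  map_id O := by
    have h : (fun φ : O.unop.obj ⟶ X => toGHom G (𝟙 O.unop) ≫ φ) = _root_.id := by
      funext φ
      simp
    show ModuleCat.ofHom (Finsupp.lmapDomain R R _) = _
    simp only [unop_id]
    rw [h, Finsupp.lmapDomain_id]
    rfl
  map_comp {O O' O''} f g := by
    have h : (fun φ : O.unop.obj ⟶ X => toGHom G (g.unop ≫ f.unop) ≫ φ)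
        = (fun φ : O'.unop.obj ⟶ X => toGHom G g.unop ≫ φ) ∘
          (fun φ : O.unop.obj ⟶ X => toGHom G f.unop ≫ φ) := by
      funext φ
      simp
    show ModuleCat.ofHom (Finsupp.lmapDomain R R _) = _
    simp only [unop_comp]
    rw [h, Finsupp.lmapDomain_comp]
    rfl

/-- The representable coefficient system `R[G/H^?]`. -/
noncomputable def orbitSystem (H : Subgroup G) : CoeffSystem R G :=
  freeSystem R G (orbitGSet G H)

/-- Evaluation of a coefficient system at a subgroup `H`, i.e. at the orbit `G/H`. -/
def evalAt (L : CoeffSystem R G) (H : Subgroup G) : ModuleCat R :=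
  L.obj (Opposite.op (orbitObj G H))

/-! A monomorphism of coefficient systems is injective on every component, and the component of
`R[X^?]` at `P/K` is free on `Hom(P/K, X)`; over a field this gives
`|Hom(P/K, P/U)| ≤ |Hom(P/K, P/V)|` for every `K`. At `K = U` the left side contains the identity,
so there is a `P`-map `φ : P/U → P/V`; at `K = 1` it reads `|P/U| ≤ |P/V|`. A `P`-map into a
transitive `P`-set is surjective, so `φ` is bijective, i.e. an isomorphism of `P`-sets. Such an
isomorphism matches stabilizers, which makes `U` and `V` conjugate, and it makes every component of
`f` an injective linear map between spaces of the same finite dimension. -/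

open Function

section OrbitGSet

variable {G}

lemma orbitGSet_hom_smul {U : Subgroup G} {X : GSet G} (φ : orbitGSet G U ⟶ X) (g : G)
    (y : G ⧸ U) : φ.hom (g • y) = X.ρ g (φ.hom y) :=
  ConcreteCategory.congr_hom (φ.comm g) y

lemma orbitGSet_hom_ext {U : Subgroup G} {X : GSet G} {φ ψ : orbitGSet G U ⟶ X}
    (h : φ.hom ((1 : G) : G ⧸ U) = ψ.hom ((1 : G) : G ⧸ U)) : φ = ψ := by
  refine Action.hom_ext _ _ (ConcreteCategory.hom_ext _ _ fun y => ?_)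
  obtain ⟨g, rfl⟩ := QuotientGroup.mk_surjective y
  have hy : (g : G ⧸ U) = g • ((1 : G) : G ⧸ U) := by simp
  rw [hy, orbitGSet_hom_smul, orbitGSet_hom_smul, h]

lemma orbitGSet_hom_surjective {U V : Subgroup G} (φ : orbitGSet G U ⟶ orbitGSet G V) :
    Surjective φ.hom := by
  intro y
  obtain ⟨g, hg⟩ := QuotientGroup.mk_surjective (φ.hom ((1 : G) : G ⧸ U))
  obtain ⟨a, rfl⟩ := QuotientGroup.mk_surjective y
  refine ⟨((a * g⁻¹ : G) : G ⧸ U), ?_⟩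
  have hy : ((a * g⁻¹ : G) : G ⧸ U) = (a * g⁻¹) • ((1 : G) : G ⧸ U) := by simp
  rw [hy, orbitGSet_hom_smul, ← hg]
  show (a * g⁻¹) • (g : G ⧸ V) = a
  simp [MulAction.Quotient.smul_mk]

lemma stabilizer_orbitGSet_iso_hom_apply {U V : Subgroup G} (e : orbitGSet G U ≅ orbitGSet G V)
    (y : G ⧸ U) :
    MulAction.stabilizer G (α := G ⧸ V) (e.hom.hom y) = MulAction.stabilizer G y := by
  let f : G ⧸ U → G ⧸ V := e.hom.hom
  have hsmul : ∀ (g : G) (y : G ⧸ U), f (g • y) = g • f y := orbitGSet_hom_smul e.hom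
  have hinj : Injective f := ((ConcreteCategory.isIso_iff_bijective _).mp inferInstance).1
  ext g
  change g • f y = f y ↔ g • y = y
  rw [← hsmul, hinj.eq_iff]

lemma exists_map_conj_eq_of_orbitGSet_iso {U V : Subgroup G} (e : orbitGSet G U ≅ orbitGSet G V) :
    ∃ g : G, U.map (MulAut.conj g).toMonoidHom = V := by
  obtain ⟨g, hg⟩ := QuotientGroup.mk_surjective (e.inv.hom ((1 : G) : G ⧸ V))
  refine ⟨g, ?_⟩
  have h := stabilizer_orbitGSet_iso_hom_apply e.symm ((1 : G) : G ⧸ V)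
  have hg' : (g : G ⧸ U) = g • ((1 : G) : G ⧸ U) := by simp
  rwa [Iso.symm_hom, ← hg, hg', MulAction.stabilizer_smul_eq_stabilizer_map_conj,
    MulAction.stabilizer_quotient, MulAction.stabilizer_quotient] at h

def orbitGSetBotHom (X : GSet G) (x : X.V) : orbitGSet G ⊥ ⟶ X where
  hom := TypeCat.ofHom fun q => X.ρ (QuotientGroup.quotientEquivSelf G q) x
  comm g := by
    refine ConcreteCategory.hom_ext _ _ fun q => ?_
    obtain ⟨a, rfl⟩ := QuotientGroup.mk_surjective q
    show X.ρ (g * a) x = X.ρ g (X.ρ a x)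
    rw [map_mul]
    rfl

def orbitGSetBotHomEquiv (X : GSet G) : (orbitGSet G ⊥ ⟶ X) ≃ X.V where
  toFun φ := φ.hom ((1 : G) : G ⧸ ⊥)
  invFun := orbitGSetBotHom X
  left_inv φ := orbitGSet_hom_ext (by show X.ρ 1 _ = _; rw [map_one]; rfl)
  right_inv x := by show X.ρ 1 x = x; rw [map_one]; rfl

instance [Finite G] (H : Subgroup G) : Finite (orbitGSet G H).V :=
  inferInstanceAs (Finite (G ⧸ H))

instance {X : GSet G} [Finite X.V] (O : OrbitCat G) : Finite (O.obj ⟶ X) := by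
  obtain ⟨H, ⟨i⟩⟩ := O.property
  have : Finite (orbitGSet G H ⟶ X) :=
    Finite.of_injective (fun φ => φ.hom ((1 : G) : G ⧸ H)) fun _ _ => orbitGSet_hom_ext
  exact Finite.of_equiv _ (i.homCongr (Iso.refl X)).symm

lemma orbitGSet_isIso_of_card_quotient_le [Finite G] {U V : Subgroup G}
    (φ : orbitGSet G U ⟶ orbitGSet G V) (h : Nat.card (G ⧸ U) ≤ Nat.card (G ⧸ V)) :
    IsIso φ := by
  have : IsIso φ.hom := (ConcreteCategory.isIso_iff_bijective _).mpr
    ((orbitGSet_hom_surjective φ).bijective_of_nat_card_le h)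
  exact Action.isIso_of_hom_isIso φ

end OrbitGSet

namespace Finsupp

lemma nat_card_le_of_injective {R : Type*} [Ring R] [StrongRankCondition R] {α β : Type*}
    [Finite α] [Finite β] (f : (α →₀ R) →ₗ[R] β →₀ R) (hf : Injective f) :
    Nat.card α ≤ Nat.card β := by
  have := Fintype.ofFinite α
  have := Fintype.ofFinite β
  simpa only [Nat.card_eq_fintype_card] using card_le_of_injective' R f hf

lemma bijective_of_injective_of_nat_card_eq {K : Type*} [DivisionRing K] {α β : Type*}
    [Finite α] [Finite β] (f : (α →₀ K) →ₗ[K] β →₀ K) (hf : Injective f)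
    (h : Nat.card α = Nat.card β) : Bijective f := by
  have := Fintype.ofFinite α
  have := Fintype.ofFinite β
  refine ⟨hf, (LinearMap.injective_iff_surjective_of_finrank_eq_finrank ?_).mp hf⟩
  simpa only [Module.finrank_finsupp_self, Nat.card_eq_fintype_card] using h

end Finsupp

section FreeSystem

variable {K : Type} [Field K] {G} {X Y : GSet G}

lemma freeSystem_app_injective_of_mono (f : freeSystem K G X ⟶ freeSystem K G Y) (hf : Mono f)
    (O : (OrbitCat G)ᵒᵖ) : Injective (f.app O) :=
  (ModuleCat.mono_iff_injective _).mp (NatTrans.mono_iff_mono_app f |>.mp hf O)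

lemma freeSystem_card_hom_le_of_mono [Finite X.V] [Finite Y.V]
    (f : freeSystem K G X ⟶ freeSystem K G Y) (hf : Mono f) (O : OrbitCat G) :
    Nat.card (O.obj ⟶ X) ≤ Nat.card (O.obj ⟶ Y) :=
  Finsupp.nat_card_le_of_injective (f.app (Opposite.op O)).hom
    (freeSystem_app_injective_of_mono f hf _)

lemma freeSystem_isIso_of_mono_of_iso [Finite X.V] [Finite Y.V]
    (f : freeSystem K G X ⟶ freeSystem K G Y) (hf : Mono f) (e : X ≅ Y) : IsIso f := by
  have (O : (OrbitCat G)ᵒᵖ) : IsIso (f.app O) :=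
    (ConcreteCategory.isIso_iff_bijective _).mpr
      (Finsupp.bijective_of_injective_of_nat_card_eq (f.app O).hom
        (freeSystem_app_injective_of_mono f hf O) (Nat.card_congr ((Iso.refl _).homCongr e)))
  exact NatIso.isIso_of_isIso_app f

end FreeSystem

theorem mono_orbitSystem_isIso_general (p : ℕ) [Fact p.Prime] (P : Type) [Group P] [Fintype P]
    (U V : Subgroup P)
    (f : orbitSystem (ZMod p) P U ⟶ orbitSystem (ZMod p) P V) (hf : Mono f) :
    IsIso f ∧ ∃ g : P, Subgroup.map (MulAut.conj g).toMonoidHom U = V := by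
  have hle := freeSystem_card_hom_le_of_mono f hf
  obtain ⟨φ⟩ : Nonempty (orbitGSet P U ⟶ orbitGSet P V) := by
    have : Nonempty ((orbitObj P U).obj ⟶ orbitGSet P U) := ⟨𝟙 _⟩
    exact (Nat.card_pos_iff.mp (Nat.card_pos.trans_le (hle (orbitObj P U)))).1
  have hidx : Nat.card (P ⧸ U) ≤ Nat.card (P ⧸ V) :=
    calc Nat.card (P ⧸ U) = Nat.card ((orbitObj P ⊥).obj ⟶ orbitGSet P U) :=
          (Nat.card_congr (orbitGSetBotHomEquiv (orbitGSet P U))).symm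
      _ ≤ Nat.card ((orbitObj P ⊥).obj ⟶ orbitGSet P V) := hle (orbitObj P ⊥)
      _ = Nat.card (P ⧸ V) := Nat.card_congr (orbitGSetBotHomEquiv (orbitGSet P V))
  have := orbitGSet_isIso_of_card_quotient_le φ hidx
  exact ⟨freeSystem_isIso_of_mono_of_iso f hf (asIso φ),
    exists_map_conj_eq_of_orbitGSet_iso (asIso φ)⟩

/-- over `F_p` and a finite `p`-group `P`, any monomorphism
`R[P/U^?] → R[P/V^?]` between indecomposable projective coefficient systems is an
isomorphism, and then `U` and `V` are conjugate. -/
theorem mono_orbitSystem_isIso (p : ℕ) [Fact p.Prime] (P : Type) [Group P] [Fintype P]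
    (hP : IsPGroup p P) (U V : Subgroup P)
    (f : orbitSystem (ZMod p) P U ⟶ orbitSystem (ZMod p) P V) (hf : Mono f) :
    IsIso f ∧ ∃ g : P, Subgroup.map (MulAut.conj g).toMonoidHom U = V :=
  mono_orbitSystem_isIso_general p P U V f hf
end

section
/- Let (a_q), (b_q), (c_q) be eventually-zero sequences of nonnegative integers satisfying, for a prime power |P| = n and all q, r ≥ 0, the Floyd–May inequality a_q + Σ_{i=0}^{r} (n−1)^i c_{q+i} ≤ Σ_{i=0}^{r} (n−1)^i b_{q+i} + (n−1)^{r+1} a_{q+r+1}, together with the Euler characteristic identity Σ_q (−1)^q b_q = Σ_q (−1)^q c_q + n · Σ_q (−1)^q a_q. Suppose b_q = 1 for exactly one value q = n_0 and b_q = 0 otherwise, and suppose additionally the refined inequality a_q + Σ_{i=0}^{r} c_{q+i} ≤ Σ_{i=0}^{r} b_{q+i} + a_{q+r+1} holds for suitable r. Then Σ_q c_q = 1, i.e. there is exactly one m with c_m = 1 and c_q = 0 for q ≠ m. -/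
/-!
Taking `q = 0` and `r` beyond the support of `a` in the refined inequality bounds the partial
sums of `c` by those of `b`, hence by `1`, along arbitrarily long ranges, so `Σ c_q ≤ 1`.
If `Σ c_q = 0`, the Euler characteristic identity reads `±1 = n · χ(a)`, impossible for `n ≥ 2`.
-/

open Finset

lemma sum_range_le_of_forall_exists_ge {f : ℕ → ℕ} {k : ℕ}
    (h : ∀ N, ∃ r ≥ N, ∑ i ∈ range r, f i ≤ k) (N : ℕ) : ∑ i ∈ range N, f i ≤ k := by
  obtain ⟨r, hr, hsum⟩ := h N
  exact (sum_le_sum_of_subset (range_subset_range.mpr hr)).trans hsum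

lemma forall_sum_range_le_one_iff {f : ℕ → ℕ} :
    (∀ N, ∑ i ∈ range N, f i ≤ 1) ↔ f = 0 ∨ ∃ m, f m = 1 ∧ ∀ q, q ≠ m → f q = 0 := by
  constructor
  · intro h
    by_cases hf : f = 0
    · exact .inl hf
    obtain ⟨m, hm⟩ : ∃ m, f m ≠ 0 := by simpa [funext_iff] using hf
    have pair_le (q : ℕ) (hq : q ≠ m) : f m + f q ≤ 1 := by
      rw [← sum_pair hq.symm]
      refine (sum_le_sum_of_subset fun i hi => ?_).trans (h (max m q + 1))
      simp only [mem_insert, mem_singleton] at hi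
      rcases hi with rfl | rfl <;> simp
    refine .inr ⟨m, ?_, fun q hq => ?_⟩
    · have := pair_le (m + 1) (by omega)
      omega
    · have := pair_le q hq
      omega
  · rintro (rfl | ⟨m, hm1, hm0⟩) N
    · simp
    · have hf : f = Pi.single m 1 := funext fun q => by
        by_cases hq : q = m
        · subst hq; simp [hm1]
        · simp [hq, hm0 q hq]
      rw [hf, sum_pi_single']
      split_ifs <;> simp

lemma eq_one_of_natCast_dvd_neg_one_pow {n k : ℕ} (h : (n : ℤ) ∣ (-1) ^ k) : n = 1 :=
  Nat.isUnit_iff.mp <| Int.ofNat_isUnit.mp <| isUnit_of_dvd_unit h (isUnit_one.neg.pow k)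

theorem smith_affine_arithmetic_general (n : ℕ) (hn : IsPrimePow n) (a b c : ℕ → ℕ)
    (ha : ∃ M : ℕ, ∀ i : ℕ, M ≤ i → a i = 0)
    (hrefined : ∀ q r₀ : ℕ, ∃ r : ℕ, r₀ ≤ r ∧
      a q + ∑ i ∈ Finset.range (r + 1), c (q + i) ≤
        (∑ i ∈ Finset.range (r + 1), b (q + i)) + a (q + r + 1))
    (hEuler : (∑ᶠ q : ℕ, (-1 : ℤ) ^ q * (b q : ℤ)) =
      (∑ᶠ q : ℕ, (-1 : ℤ) ^ q * (c q : ℤ)) + n * ∑ᶠ q : ℕ, (-1 : ℤ) ^ q * (a q : ℤ))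
    (n₀ : ℕ) (hb1 : b n₀ = 1) (hb0 : ∀ q : ℕ, q ≠ n₀ → b q = 0) :
    ∃ m : ℕ, c m = 1 ∧ ∀ q : ℕ, q ≠ m → c q = 0 := by
  obtain ⟨Ma, hMa⟩ := ha
  have hb_le := forall_sum_range_le_one_iff.mpr (.inr ⟨n₀, hb1, hb0⟩)
  have hc_le : ∀ N, ∑ i ∈ range N, c i ≤ 1 := by
    refine sum_range_le_of_forall_exists_ge fun N => ?_
    obtain ⟨r, hr, hineq⟩ := hrefined 0 (max N Ma)
    have ha_tail : a (0 + r + 1) = 0 := hMa _ (by omega)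
    simp only [zero_add] at hineq ha_tail
    exact ⟨r + 1, by omega, by linarith [hb_le (r + 1)]⟩
  refine (forall_sum_range_le_one_iff.mp hc_le).resolve_left fun hc0 => hn.ne_one ?_
  have hb_euler : ∑ᶠ q : ℕ, (-1 : ℤ) ^ q * (b q : ℤ) = (-1) ^ n₀ := by
    rw [finsum_eq_single _ n₀ fun q hq => by simp [hb0 q hq], hb1, Nat.cast_one, mul_one]
  simp only [hc0, Pi.zero_apply, Nat.cast_zero, mul_zero, finsum_zero, zero_add,
    hb_euler] at hEuler
  exact eq_one_of_natCast_dvd_neg_one_pow ⟨_, hEuler⟩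

/-- the arithmetic core of the Smith theory corollary: if `b` is the
indicator of a single degree, the Floyd–May inequalities (in refined form for
arbitrarily large `r`) together with the Euler characteristic identity force
`Σ c_q = 1`. -/
theorem smith_affine_arithmetic (n : ℕ) (hn : IsPrimePow n) (a b c : ℕ → ℕ)
    (ha : ∃ M : ℕ, ∀ i : ℕ, M ≤ i → a i = 0)
    (hb : ∃ M : ℕ, ∀ i : ℕ, M ≤ i → b i = 0)
    (hc : ∃ M : ℕ, ∀ i : ℕ, M ≤ i → c i = 0)
    (hFM : ∀ q r : ℕ,
      a q + ∑ i ∈ Finset.range (r + 1), (n - 1) ^ i * c (q + i) ≤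
        (∑ i ∈ Finset.range (r + 1), (n - 1) ^ i * b (q + i)) + (n - 1) ^ (r + 1) * a (q + r + 1))
    (hrefined : ∀ q r₀ : ℕ, ∃ r : ℕ, r₀ ≤ r ∧
      a q + ∑ i ∈ Finset.range (r + 1), c (q + i) ≤
        (∑ i ∈ Finset.range (r + 1), b (q + i)) + a (q + r + 1))
    (hEuler : (∑ᶠ q : ℕ, (-1 : ℤ) ^ q * (b q : ℤ)) =
      (∑ᶠ q : ℕ, (-1 : ℤ) ^ q * (c q : ℤ)) + n * ∑ᶠ q : ℕ, (-1 : ℤ) ^ q * (a q : ℤ))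
    (n₀ : ℕ) (hb1 : b n₀ = 1) (hb0 : ∀ q : ℕ, q ≠ n₀ → b q = 0) :
    ∃ m : ℕ, c m = 1 ∧ ∀ q : ℕ, q ≠ m → c q = 0 :=
  smith_affine_arithmetic_general n hn a b c ha hrefined hEuler n₀ hb1 hb0
end

section
/- Let G be a finite group, R a commutative ring, and A a set of subgroups of G closed under conjugation and under passing to larger subgroups (supergroups). Define L_A on the representable coefficient systems by: L_A R[G/H^?] equals R[G/H^?] (the whole system) if H ∈ A, and is the subsystem R[(S_A(G/H))^?] in general, where S_A(G/H) = ∪_{J ∈ A} (G/H)^J. Then for every H ≤ G, the smallest subsystem of R[G/H^?] agreeing with R[G/H^?] on all members of A is exactly R[(S_A(G/H))^?]. -/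
open CategoryTheory

universe u

variable (R : Type) [CommRing R] (G : Type) [Group G]

open CategoryTheory.Limits in
instance (R : Type) [CommRing R] (G : Type) [Group G] :
    HasFiniteBiproducts (CoeffSystem R G) :=
  HasFiniteBiproducts.of_hasFiniteProducts

section Subsystems

variable {R : Type} [CommRing R] {G : Type} [Group G]

/-- A subsystem of a coefficient system: a submodule at each orbit, closed under the
structure maps. -/
structure Subsystem (L : CoeffSystem R G) where
  toFun : ∀ O : (OrbitCat G)ᵒᵖ, Submodule R (L.obj O)
  map_mem : ∀ {O O' : (OrbitCat G)ᵒᵖ} (f : O ⟶ O') (x : L.obj O),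
    x ∈ toFun O → L.map f x ∈ toFun O'

/-- The subsystem of `R[X^?]` spanned, at each orbit `O`, by the maps `O → X` taking
values in a subset `Y ⊆ X`; for `Y = S_A X` this is `R[(S_A X)^?]`. -/
def subFree (X : GSet G) (Y : Set X.V) : Subsystem (freeSystem R G X) where
  toFun O := Finsupp.supported R R {φ : O.unop.obj ⟶ X | ∀ o, φ.hom o ∈ Y}
  map_mem := by
    classical
    intro O O' f x hx
    refine (Finsupp.mem_supported' R _).2 ?_
    intro ψ hψ
    replace hx := (Finsupp.mem_supported R _).1 hx
    show Finsupp.mapDomain (fun φ => toGHom G f.unop ≫ φ) x ψ = 0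
    by_contra h0
    have hmem := Finsupp.mapDomain_support (f := fun φ => toGHom G f.unop ≫ φ)
      (Finsupp.mem_support_iff.2 h0)
    rcases Finset.mem_image.1 hmem with ⟨φ, hφ, rfl⟩
    apply hψ
    intro o
    exact hx hφ ((toGHom G f.unop).hom o)

end Subsystems

/-!
A `G`-map `φ : G/K → X` is determined by the point `y = φ(eK)`, which is fixed by `K`, and it
sends `gK` to `g • y`, which is fixed by `gKg⁻¹`. So for `K ∈ A` every such map takes values in
`S_A X`, by closure under conjugation. Conversely, if `y` is fixed by some `J ∈ A`, it is fixed by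
`J ⊔ K ∈ A`, by closure under supergroups, and `φ` factors as `G/K → G/(J ⊔ K) → X`. Hence each
basis element `[φ]` of `R[(S_A X)^?](G/K)` is the image of a basis element of `R[X^?](G/(J ⊔ K))`
under a structure map, so it lies in every subsystem that is everything on `A`.
-/

open MulAction

section OrbitMaps

variable {G : Type} [Group G] {X : Type} [MulAction G X]

def Action.Hom.toMulActionHom {Y : Type} [MulAction G Y]
    (φ : Action.ofMulAction G X ⟶ Action.ofMulAction G Y) : X →[G] Y where
  toFun := φ.hom
  map_smul' g x := types_congr_hom (φ.comm g) x

lemma MulActionHom.stabilizer_le_stabilizer_apply {Y : Type} [MulAction G Y] (f : X →[G] Y)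
    (x : X) : stabilizer G x ≤ stabilizer G (f x) := fun g hg => by
  rw [mem_stabilizer_iff, ← map_smul, mem_stabilizer_iff.mp hg]

def orbitHom {K : Subgroup G} (y : X) (hy : K ≤ stabilizer G y) :
    orbitGSet G K ⟶ Action.ofMulAction G X where
  hom := TypeCat.ofHom fun x : G ⧸ K =>
    Quotient.liftOn' x (fun a : G => (a • y : X)) fun a b hab =>
      calc a • y = a • (a⁻¹ * b) • y := by rw [hy (QuotientGroup.leftRel_apply.mp hab)]
        _ = b • y := by rw [smul_smul, mul_inv_cancel_left]
  comm g := ConcreteCategory.hom_ext _ _ fun x => by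
    induction x using QuotientGroup.induction_on with
    | H a => exact mul_smul (show G from g) a y

variable {K : Subgroup G} (φ : orbitGSet G K ⟶ Action.ofMulAction G X)

lemma toMulActionHom_mk (g : G) :
    φ.toMulActionHom (g : G ⧸ K) = g • φ.toMulActionHom ((1 : G) : G ⧸ K) := by
  rw [← map_smul, MulAction.Quotient.smul_mk, smul_eq_mul, mul_one]

lemma le_stabilizer_toMulActionHom_one :
    K ≤ stabilizer G (φ.toMulActionHom ((1 : G) : G ⧸ K)) :=
  (stabilizer_quotient K).ge.trans (φ.toMulActionHom.stabilizer_le_stabilizer_apply _)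

lemma eq_orbitHom : φ = orbitHom _ (le_stabilizer_toMulActionHom_one φ) := by
  refine Action.Hom.ext <| ConcreteCategory.hom_ext _ _ fun x => ?_
  induction x using QuotientGroup.induction_on with
  | H g => exact toMulActionHom_mk φ g

variable (G) in
def orbitProj {K' K : Subgroup G} (h : K' ≤ K) : orbitGSet G K' ⟶ orbitGSet G K :=
  orbitHom ((1 : G) : G ⧸ K) (h.trans (stabilizer_quotient K).ge)

lemma orbitProj_comp_orbitHom {K' : Subgroup G} (h : K' ≤ K) {y : X}
    (hy : K ≤ stabilizer G y) : orbitProj G h ≫ orbitHom y hy = orbitHom y (h.trans hy) := by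
  refine Action.Hom.ext <| ConcreteCategory.hom_ext _ _ fun x => ?_
  induction x using QuotientGroup.induction_on with
  | H g => exact congrArg (· • y) (mul_one g)

end OrbitMaps

section UnionFixedPoints

variable {G : Type} [Group G] {A : Set (Subgroup G)} {X : Type} [MulAction G X]

variable (A X) in
/-- The subset `S_A X` of the paper. -/
def unionFixedPoints : Set X :=
  ⋃ J ∈ A, {y | ∀ j ∈ J, j • y = y}

lemma mem_unionFixedPoints {y : X} :
    y ∈ unionFixedPoints A X ↔ ∃ J ∈ A, J ≤ stabilizer G y := by
  simp [unionFixedPoints, SetLike.le_def, mem_stabilizer_iff]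

lemma smul_mem_unionFixedPoints
    (hconj : ∀ J ∈ A, ∀ g : G, Subgroup.map (MulAut.conj g).toMonoidHom J ∈ A)
    (g : G) {y : X} (hy : y ∈ unionFixedPoints A X) : g • y ∈ unionFixedPoints A X := by
  obtain ⟨J, hJ, hJy⟩ := mem_unionFixedPoints.mp hy
  rw [mem_unionFixedPoints, stabilizer_smul_eq_stabilizer_map_conj]
  exact ⟨_, hconj J hJ g, Subgroup.map_mono hJy⟩

lemma orbitHom_apply_mem_unionFixedPoints
    (hconj : ∀ J ∈ A, ∀ g : G, Subgroup.map (MulAut.conj g).toMonoidHom J ∈ A)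
    {K : Subgroup G} (hK : K ∈ A) (φ : orbitGSet G K ⟶ Action.ofMulAction G X) (o : G ⧸ K) :
    φ.toMulActionHom o ∈ unionFixedPoints A X := by
  induction o using QuotientGroup.induction_on with
  | H g =>
    rw [toMulActionHom_mk]
    exact smul_mem_unionFixedPoints hconj g
      (mem_unionFixedPoints.mpr ⟨K, hK, le_stabilizer_toMulActionHom_one φ⟩)

lemma exists_eq_toGHom_comp_of_mem_unionFixedPoints
    (hsup : ∀ J ∈ A, ∀ K : Subgroup G, J ≤ K → K ∈ A) {O : OrbitCat G}
    (φ : O.obj ⟶ Action.ofMulAction G X) (hφ : ∀ o, φ.hom o ∈ unionFixedPoints A X) :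
    ∃ K ∈ A, ∃ (u : O ⟶ orbitObj G K) (ψ : orbitGSet G K ⟶ Action.ofMulAction G X),
      φ = toGHom G u ≫ ψ := by
  obtain ⟨K', ⟨e⟩⟩ := O.property
  set φ' : orbitGSet G K' ⟶ Action.ofMulAction G X := e.inv ≫ φ
  have hφ' : φ'.toMulActionHom ((1 : G) : G ⧸ K') ∈ unionFixedPoints A X := hφ _
  obtain ⟨J, hJ, hJy⟩ := mem_unionFixedPoints.mp hφ'
  have hy : J ⊔ K' ≤ stabilizer G (φ'.toMulActionHom ((1 : G) : G ⧸ K')) :=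
    sup_le hJy (le_stabilizer_toMulActionHom_one φ')
  refine ⟨J ⊔ K', hsup J hJ _ le_sup_left,
    ObjectProperty.homMk (e.hom ≫ orbitProj G le_sup_right), orbitHom _ hy, ?_⟩
  calc φ = e.hom ≫ φ' := by simp [φ']
    _ = e.hom ≫ orbitHom _ (le_sup_right.trans hy) := by rw [← eq_orbitHom]
    _ = _ := by rw [← orbitProj_comp_orbitHom le_sup_right hy]; rfl

end UnionFixedPoints

section Subsystems

variable {R : Type} [CommRing R] {G : Type} [Group G]

lemma freeSystem_map_single {X : GSet G} {O O' : OrbitCat G} (u : O ⟶ O') (ψ : O'.obj ⟶ X)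
    (r : R) :
    (freeSystem R G X).map u.op (Finsupp.single ψ r) = Finsupp.single (toGHom G u ≫ ψ) r :=
  Finsupp.mapDomain_single

lemma Subsystem.single_comp_mem {X : GSet G} (S : Subsystem (freeSystem R G X))
    {O O' : OrbitCat G} (u : O ⟶ O') {ψ : O'.obj ⟶ X} {r : R}
    (h : Finsupp.single ψ r ∈ S.toFun (Opposite.op O')) :
    Finsupp.single (toGHom G u ≫ ψ) r ∈ S.toFun (Opposite.op O) :=
  freeSystem_map_single u ψ r ▸ S.map_mem u.op _ h

variable {A : Set (Subgroup G)} {X : Type} [MulAction G X]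

lemma subFree_unionFixedPoints_eq_top
    (hconj : ∀ J ∈ A, ∀ g : G, Subgroup.map (MulAut.conj g).toMonoidHom J ∈ A)
    {K : Subgroup G} (hK : K ∈ A) :
    (subFree (R := R) (Action.ofMulAction G X) (unionFixedPoints A X)).toFun
      (Opposite.op (orbitObj G K)) = ⊤ := by
  refine (congrArg (Finsupp.supported R R) ?_).trans Finsupp.supported_univ
  exact Set.eq_univ_of_forall (orbitHom_apply_mem_unionFixedPoints hconj hK)

lemma subFree_unionFixedPoints_le
    (hsup : ∀ J ∈ A, ∀ K : Subgroup G, J ≤ K → K ∈ A)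
    (S : Subsystem (freeSystem R G (Action.ofMulAction G X)))
    (hS : ∀ K ∈ A, S.toFun (Opposite.op (orbitObj G K)) = ⊤) (O : (OrbitCat G)ᵒᵖ) :
    (subFree (Action.ofMulAction G X) (unionFixedPoints A X)).toFun O ≤ S.toFun O := by
  refine (Finsupp.supported_eq_span_single R _).trans_le (Submodule.span_le.mpr ?_)
  rintro _ ⟨φ, hφ, rfl⟩
  obtain ⟨K, hK, u, ψ, rfl⟩ := exists_eq_toGHom_comp_of_mem_unionFixedPoints hsup φ hφ
  exact S.single_comp_mem u (Submodule.eq_top_iff'.mp (hS K hK) _)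

end Subsystems

theorem smallest_subsystem_eq_sA_general (R : Type) [CommRing R] (G : Type) [Group G]
    (A : Set (Subgroup G))
    (hconj : ∀ J ∈ A, ∀ g : G, Subgroup.map (MulAut.conj g).toMonoidHom J ∈ A)
    (hsup : ∀ J ∈ A, ∀ K : Subgroup G, J ≤ K → K ∈ A) (H : Subgroup G)
    (T : Subsystem (orbitSystem R G H))
    (hT : T = subFree (orbitGSet G H)
      (⋃ J ∈ A, {y : G ⧸ H | ∀ j ∈ J, j • y = y})) :
    (∀ K ∈ A, T.toFun (Opposite.op (orbitObj G K)) = ⊤) ∧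
    (∀ S : Subsystem (orbitSystem R G H),
      (∀ K ∈ A, S.toFun (Opposite.op (orbitObj G K)) = ⊤) →
      ∀ O : (OrbitCat G)ᵒᵖ, T.toFun O ≤ S.toFun O) := by
  subst hT
  exact ⟨fun K hK => subFree_unionFixedPoints_eq_top hconj hK, subFree_unionFixedPoints_le hsup⟩

/-- for `A` closed under conjugation and supergroups, the smallest
subsystem of `R[G/H^?]` agreeing with it on all members of `A` is
`R[(S_A(G/H))^?]`, the subsystem spanned by maps with values in `S_A(G/H)`. -/
theorem smallest_subsystem_eq_sA (R : Type) [CommRing R] (G : Type) [Group G] [Finite G]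
    (A : Set (Subgroup G))
    (hconj : ∀ J ∈ A, ∀ g : G, Subgroup.map (MulAut.conj g).toMonoidHom J ∈ A)
    (hsup : ∀ J ∈ A, ∀ K : Subgroup G, J ≤ K → K ∈ A) (H : Subgroup G)
    (T : Subsystem (orbitSystem R G H))
    (hT : T = subFree (orbitGSet G H)
      (⋃ J ∈ A, {y : G ⧸ H | ∀ j ∈ J, j • y = y})) :
    (∀ K ∈ A, T.toFun (Opposite.op (orbitObj G K)) = ⊤) ∧
    (∀ S : Subsystem (orbitSystem R G H),
      (∀ K ∈ A, S.toFun (Opposite.op (orbitObj G K)) = ⊤) →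
      ∀ O : (OrbitCat G)ᵒᵖ, T.toFun O ≤ S.toFun O) :=
  smallest_subsystem_eq_sA_general R G A hconj hsup H T hT
end
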